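/- arXiv:2503.24054 — 6 statements merged into one kernel-verified Lean document; each statement's English description precedes it below -/
import Mathlib

section
/- Let R be a commutative ring, let u, v : ℕ × ℕ → R, let (a_n)_{n≥0} be a sequence in R, and let (a_n^k) be the associated Euler–Seidel matrix with coefficients. Then for all integers n ≥ 0 and k ≥ 0, a_n^k = Σ_{ℓ=0}^{k} C_n(k,ℓ) · a_{n+ℓ}^0, where C_n(k,ℓ) = Σ_{A ⊆ {1,…,k}, |A| = k−ℓ} ( ∏_{i=0}^{k−ℓ−1} u(n+k−h_i−i, h_i) ) · ( ∏_{j=0}^{ℓ−1} v(n+j, m_j) ), with h_0 > h_1 > ⋯ > h_{k−ℓ−1} the decreasing enumeration of A and m_0 > m_1 > ⋯ > m_{ℓ−1} the decreasing enumeration of {1,…,k} ∖ A. -/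
/-!
Unfolding the recursion `k` times writes `a_n^k` as a sum over the `2^k` ways of choosing, at
each row `k, k-1, …, 1`, the `u`-branch (same column) or the `v`-branch (next column). If `A` is
the set of rows where the `u`-branch is taken, the path ends at `a_{n+k-|A|}^0` and its weight is
`eulerSeidelWeight u v n k A`; this is checked one row at a time, by splitting the subsets of
`{1,…,k+1}` according to whether they contain `k+1`. Grouping the paths by `ℓ = k - |A|` gives
`C_n(k,ℓ)`.
-/

open Finset

/-- Decreasing enumeration of a finite set of naturals, as a list accessed by `getD`. -/
def descEnum (A : Finset ℕ) (i : ℕ) : ℕ := (A.sort (· ≤ ·)).reverse.getD i 0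

/-- The coefficient `C_n(k,ℓ)` of Theorem 2.1: sum over subsets `A ⊆ {1,…,k}` with
`|A| = k − ℓ` of the product of the `u`-weights along the decreasing enumeration of `A`
and the `v`-weights along the decreasing enumeration of `{1,…,k} \ A`. -/
def eulerSeidelCoeff {R : Type*} [CommRing R] (u v : ℕ → ℕ → R) (n k ℓ : ℕ) : R :=
  ∑ A ∈ (Finset.Icc 1 k).powersetCard (k - ℓ),
    (∏ i ∈ Finset.range (k - ℓ), u (n + k - descEnum A i - i) (descEnum A i)) *
    (∏ j ∈ Finset.range ℓ, v (n + j) (descEnum ((Finset.Icc 1 k) \ A) j))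

lemma Finset.reverse_sort_le {α : Type*} [LinearOrder α] (s : Finset α) :
    (s.sort (· ≤ ·)).reverse = s.sort (· ≥ ·) :=
  ((sortedGT_sort s).eq_reverse_of_mem_iff_of_sortedLT (by simp) (sortedLT_sort s)).symm

section descEnum

variable {A : Finset ℕ} {m : ℕ}

lemma descEnum_insert_of_forall_lt (h : ∀ x ∈ A, x < m) (i : ℕ) :
    descEnum (insert m A) i = (m :: A.sort (· ≥ ·)).getD i 0 := by
  rw [descEnum, reverse_sort_le,
    sort_insert _ (fun x hx ↦ (h x hx).le) (fun hm ↦ (h m hm).false)]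

lemma descEnum_insert_zero (h : ∀ x ∈ A, x < m) : descEnum (insert m A) 0 = m := by
  rw [descEnum_insert_of_forall_lt h]; rfl

lemma descEnum_insert_succ (h : ∀ x ∈ A, x < m) (i : ℕ) :
    descEnum (insert m A) (i + 1) = descEnum A i := by
  rw [descEnum_insert_of_forall_lt h, descEnum, reverse_sort_le]; rfl

end descEnum

/-- The summand of `eulerSeidelCoeff` at `A`, for `ℓ = k - #A`. -/
def eulerSeidelWeight {R : Type*} [CommRing R] (u v : ℕ → ℕ → R) (n k : ℕ)
    (A : Finset ℕ) : R :=
  (∏ i ∈ range #A, u (n + k - descEnum A i - i) (descEnum A i)) *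
    ∏ j ∈ range (k - #A), v (n + j) (descEnum (Icc 1 k \ A) j)

section eulerSeidelWeight

variable {R : Type*} [CommRing R] (u v : ℕ → ℕ → R) (n : ℕ) {k : ℕ}

lemma eulerSeidelWeight_succ_of_subset {A : Finset ℕ} (hA : A ⊆ Icc 1 k) :
    eulerSeidelWeight u v n (k + 1) A = v n (k + 1) * eulerSeidelWeight u v (n + 1) k A := by
  have hcard : k + 1 - #A = k - #A + 1 := by
    have := card_le_card hA; simp only [Nat.card_Icc] at this; omega
  have hlt : ∀ x ∈ Icc 1 k \ A, x < k + 1 := fun x hx ↦ by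
    simp only [mem_sdiff, mem_Icc] at hx; omega
  have hcompl : Icc 1 (k + 1) \ A = insert (k + 1) (Icc 1 k \ A) := by
    rw [← insert_Icc_right_eq_Icc_add_one (by omega), insert_sdiff_of_notMem]
    exact fun h ↦ by simpa using hA h
  rw [eulerSeidelWeight, eulerSeidelWeight, hcard, hcompl, prod_range_succ',
    descEnum_insert_zero hlt]
  simp only [descEnum_insert_succ hlt, add_zero, ← add_assoc, add_right_comm n]
  ring

lemma eulerSeidelWeight_succ_insert {B : Finset ℕ} (hB : B ⊆ Icc 1 k) :
    eulerSeidelWeight u v n (k + 1) (insert (k + 1) B) =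
      u n (k + 1) * eulerSeidelWeight u v n k B := by
  have hlt : ∀ x ∈ B, x < k + 1 := fun x hx ↦ by
    have := mem_Icc.1 (hB hx); omega
  have hcompl : Icc 1 (k + 1) \ insert (k + 1) B = Icc 1 k \ B := by
    rw [← insert_Icc_right_eq_Icc_add_one (by omega), insert_sdiff_insert,
      sdiff_insert_of_notMem (by simp)]
  rw [eulerSeidelWeight, eulerSeidelWeight, card_insert_of_notMem (fun h ↦ (hlt _ h).false),
    prod_range_succ', descEnum_insert_zero hlt, hcompl, Nat.add_sub_add_right]
  simp only [descEnum_insert_succ hlt, add_tsub_cancel_right, tsub_zero,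
    show ∀ d i, n + (k + 1) - d - (i + 1) = n + k - d - i from fun _ _ ↦ by omega]
  ring

lemma eulerSeidelCoeff_eq_sum_weight {ℓ : ℕ} (hℓ : ℓ ≤ k) :
    eulerSeidelCoeff u v n k ℓ =
      ∑ A ∈ (Icc 1 k).powersetCard (k - ℓ), eulerSeidelWeight u v n k A := by
  refine sum_congr rfl fun A hA ↦ ?_
  rw [eulerSeidelWeight, (mem_powersetCard.1 hA).2, Nat.sub_sub_self hℓ]

end eulerSeidelWeight

theorem eulerSeidel_eq_sum_powerset {R : Type*} [CommRing R] (u v : ℕ → ℕ → R)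
    (a : ℕ → ℕ → R)
    (hrec : ∀ n k, a n (k + 1) = u n (k + 1) * a n k + v n (k + 1) * a (n + 1) k) (n k : ℕ) :
    a n k = ∑ A ∈ (Icc 1 k).powerset, eulerSeidelWeight u v n k A * a (n + k - #A) 0 := by
  induction k generalizing n with
  | zero => simp [eulerSeidelWeight]
  | succ k ih =>
    rw [hrec, ih n, ih (n + 1), ← insert_Icc_right_eq_Icc_add_one (by omega),
      sum_powerset_insert (by simp), mul_sum, mul_sum, add_comm]
    congr 1 <;> refine sum_congr rfl fun A hA ↦ ?_ <;> rw [mem_powerset] at hA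
    · rw [eulerSeidelWeight_succ_of_subset u v n hA, mul_assoc]
      congr 3; omega
    · rw [eulerSeidelWeight_succ_insert u v n hA, mul_assoc,
        card_insert_of_notMem (fun h ↦ by simpa using hA h)]
      congr 3; omega

theorem eulerSeidel_entry_eq_sum_initial_general {R : Type*} [CommRing R]
    (u v : ℕ → ℕ → R) (a : ℕ → ℕ → R)
    (hrec : ∀ n k, a n (k + 1) = u n (k + 1) * a n k + v n (k + 1) * a (n + 1) k) :
    ∀ n k, a n k = ∑ ℓ ∈ Finset.range (k + 1), eulerSeidelCoeff u v n k ℓ * a (n + ℓ) 0 := by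
  intro n k
  rw [eulerSeidel_eq_sum_powerset u v a hrec, sum_powerset, Nat.card_Icc, Nat.add_sub_cancel,
    ← sum_range_reflect]
  refine sum_congr rfl fun ℓ hℓ ↦ ?_
  have hℓk : ℓ ≤ k := Nat.lt_succ_iff.1 (mem_range.1 hℓ)
  rw [add_tsub_cancel_right, eulerSeidelCoeff_eq_sum_weight u v n hℓk, sum_mul]
  refine sum_congr rfl fun A hA ↦ ?_
  rw [(mem_powersetCard.1 hA).2, show n + k - (k - ℓ) = n + ℓ by omega]

/-- Theorem 2.1: every entry of the Euler–Seidel matrix with coefficients is the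
corresponding combination of the entries of the initial sequence. -/
theorem eulerSeidel_entry_eq_sum_initial {R : Type*} [CommRing R]
    (u v : ℕ → ℕ → R) (a₀ : ℕ → R) (a : ℕ → ℕ → R)
    (h0 : ∀ n, a n 0 = a₀ n)
    (hrec : ∀ n k, a n (k + 1) = u n (k + 1) * a n k + v n (k + 1) * a (n + 1) k) :
    ∀ n k, a n k = ∑ ℓ ∈ Finset.range (k + 1), eulerSeidelCoeff u v n k ℓ * a (n + ℓ) 0 :=
  eulerSeidel_entry_eq_sum_initial_general u v a hrec
end

section
/- Let R be a nontrivial commutative ring and let u, v : ℕ × ℕ → R. There exists a unique family of coefficients r : ℕ × ℕ → R with r(k,ℓ) = 0 for ℓ > k such that, for every initial sequence (a_n)_{n≥0} in R, the final sequence (a_0^k)_{k≥0} of the Euler–Seidel matrix with coefficients M(u,v,a) satisfies a_0^k = Σ_{ℓ=0}^{k} r(k,ℓ) · a_ℓ^0 for all k ≥ 0; namely, r(k,ℓ) = C_0(k,ℓ) for 0 ≤ ℓ ≤ k. -/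
/-!
Unfolding `a_n^k = u(n,k) a_n^{k-1} + v(n,k) a_{n+1}^{k-1}` down to row `0` writes `a_n^k` as a
combination of `a_n^0, …, a_{n+k}^0` whose coefficients obey the Pascal-type recursion of
`EulerSeidel.coeff`. The closed form `C_n(k,ℓ)` obeys the same recursion: splitting the subsets
`A ⊆ {1,…,k+1}` according to whether `k+1 ∈ A` peels off the leading factor `u(n,k+1)`
(the largest element of `A`) or `v(n,k+1)` (the largest element of the complement). Uniqueness
follows by evaluating on the matrices whose initial sequence is an indicator `δ_ℓ`.
-/

open Finset

/-- `r` is a lower-triangular family of coefficients expressing, for every Euler–Seidel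
matrix with coefficients `u`, `v`, the final sequence in terms of the initial one. -/
def IsFinalCoeff {R : Type*} [CommRing R] (u v : ℕ → ℕ → R) (r : ℕ → ℕ → R) : Prop :=
  (∀ k ℓ, k < ℓ → r k ℓ = 0) ∧
    ∀ a : ℕ → ℕ → R,
      (∀ n k, a n (k + 1) = u n (k + 1) * a n k + v n (k + 1) * a (n + 1) k) →
      ∀ k, a 0 k = ∑ ℓ ∈ Finset.range (k + 1), r k ℓ * a ℓ 0

lemma Finset.sort_reverse_insert_of_forall_lt {α : Type*} [LinearOrder α] {S : Finset α} {M : α}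
    (hM : ∀ x ∈ S, x < M) :
    ((insert M S).sort (· ≤ ·)).reverse = M :: (S.sort (· ≤ ·)).reverse := by
  refine List.SortedGT.eq_of_mem_iff (sortedLT_sort _).reverse ?_ (by simp)
  rw [List.sortedGT_iff_pairwise, List.pairwise_cons]
  exact ⟨fun x hx => hM x (by simpa using hx), (sortedLT_sort S).reverse.pairwise⟩

lemma descEnum_insert_zero_s6 {S : Finset ℕ} {M : ℕ} (hM : ∀ x ∈ S, x < M) :
    descEnum (insert M S) 0 = M := by
  rw [descEnum, sort_reverse_insert_of_forall_lt hM]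
  rfl

lemma descEnum_insert_succ_s6 {S : Finset ℕ} {M : ℕ} (hM : ∀ x ∈ S, x < M) (i : ℕ) :
    descEnum (insert M S) (i + 1) = descEnum S i := by
  rw [descEnum, sort_reverse_insert_of_forall_lt hM]
  rfl

lemma forall_lt_of_subset_Icc {S : Finset ℕ} {a k : ℕ} (hS : S ⊆ Icc a k) :
    ∀ x ∈ S, x < k + 1 :=
  fun _ hx => Nat.lt_succ_of_le (mem_Icc.1 (hS hx)).2

lemma Nat.Icc_succ_right_eq_insert {a b : ℕ} (h : a ≤ b + 1) :
    Icc a (b + 1) = insert (b + 1) (Icc a b) := by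
  ext; simp only [mem_Icc, mem_insert]; omega

lemma succ_notMem_of_subset_Icc {S : Finset ℕ} {a k : ℕ} (hS : S ⊆ Icc a k) : k + 1 ∉ S :=
  fun h => (forall_lt_of_subset_Icc hS _ h).false

lemma Finset.sum_powersetCard_succ_insert {α β : Type*} [DecidableEq α] [AddCommMonoid β]
    {s : Finset α} {a : α} (ha : a ∉ s) (n : ℕ) (f : Finset α → β) :
    ∑ t ∈ (insert a s).powersetCard (n + 1), f t =
      ∑ t ∈ s.powersetCard (n + 1), f t + ∑ t ∈ s.powersetCard n, f (insert a t) := by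
  rw [powersetCard_succ_insert ha, sum_union, sum_image]
  · exact insert_erase_invOn.2.injOn.mono fun t ht ↦ notMem_mono (mem_powersetCard.1 ht).1 ha
  · aesop (add simp [disjoint_left, mem_powersetCard, insert_subset_iff])

namespace EulerSeidel

variable {R : Type*} [CommRing R] (u v : ℕ → ℕ → R)

/-- The summand of `eulerSeidelCoeff u v n k ℓ` at `A`, with `ℓ` read off as `k - #A`. -/
def term (n k : ℕ) (A : Finset ℕ) : R :=
  (∏ i ∈ range #A, u (n + k - descEnum A i - i) (descEnum A i)) *
    ∏ j ∈ range #(Icc 1 k \ A), v (n + j) (descEnum (Icc 1 k \ A) j)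

lemma eulerSeidelCoeff_eq_sum_term {n k ℓ : ℕ} (hℓ : ℓ ≤ k) :
    eulerSeidelCoeff u v n k ℓ = ∑ A ∈ (Icc 1 k).powersetCard (k - ℓ), term u v n k A := by
  refine sum_congr rfl fun A hA => ?_
  obtain ⟨hA, hcard⟩ := mem_powersetCard.1 hA
  have hcompl : #(Icc 1 k \ A) = ℓ := by
    rw [card_sdiff_of_subset hA, hcard, Nat.card_Icc]; omega
  rw [term, hcard, hcompl]

lemma term_insert {n k : ℕ} {A : Finset ℕ} (hA : A ⊆ Icc 1 k) :
    term u v n (k + 1) (insert (k + 1) A) = u n (k + 1) * term u v n k A := by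
  have hlt := forall_lt_of_subset_Icc hA
  have hcompl : Icc 1 (k + 1) \ insert (k + 1) A = Icc 1 k \ A := by
    rw [Nat.Icc_succ_right_eq_insert (by omega), insert_sdiff_insert, sdiff_insert_of_notMem]
    simp
  rw [term, term, hcompl, card_insert_of_notMem (succ_notMem_of_subset_Icc hA),
    prod_range_succ', descEnum_insert_zero_s6 hlt]
  have hshift : ∀ d i, n + (k + 1) - d - (i + 1) = n + k - d - i := by omega
  simp only [descEnum_insert_succ_s6 hlt, hshift, Nat.add_sub_cancel_right, Nat.sub_zero]
  ring

lemma term_of_subset {n k : ℕ} {A : Finset ℕ} (hA : A ⊆ Icc 1 k) :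
    term u v n (k + 1) A = v n (k + 1) * term u v (n + 1) k A := by
  have hlt := forall_lt_of_subset_Icc (sdiff_subset (s := Icc 1 k) (t := A))
  have hcompl : Icc 1 (k + 1) \ A = insert (k + 1) (Icc 1 k \ A) := by
    rw [Nat.Icc_succ_right_eq_insert (by omega),
      insert_sdiff_of_notMem _ (succ_notMem_of_subset_Icc hA)]
  rw [term, term, hcompl, card_insert_of_notMem (succ_notMem_of_subset_Icc sdiff_subset),
    prod_range_succ', descEnum_insert_zero_s6 hlt]
  simp only [descEnum_insert_succ_s6 hlt, add_assoc, add_comm 1, add_zero]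
  ring

lemma sum_term_succ_succ (n k m : ℕ) :
    ∑ A ∈ (Icc 1 (k + 1)).powersetCard (m + 1), term u v n (k + 1) A =
      v n (k + 1) * ∑ A ∈ (Icc 1 k).powersetCard (m + 1), term u v (n + 1) k A +
        u n (k + 1) * ∑ A ∈ (Icc 1 k).powersetCard m, term u v n k A := by
  rw [Nat.Icc_succ_right_eq_insert (by omega), sum_powersetCard_succ_insert (by simp), mul_sum,
    mul_sum]
  congr 1 <;> refine sum_congr rfl fun A hA => ?_
  · exact term_of_subset u v (mem_powersetCard.1 hA).1
  · exact term_insert u v (mem_powersetCard.1 hA).1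

lemma sum_term_succ_zero (n k : ℕ) :
    ∑ A ∈ (Icc 1 (k + 1)).powersetCard 0, term u v n (k + 1) A =
      v n (k + 1) * ∑ A ∈ (Icc 1 k).powersetCard 0, term u v (n + 1) k A := by
  simp only [powersetCard_zero, sum_singleton, term_of_subset u v (empty_subset _)]

/-- Unlike `eulerSeidelCoeff`, these coefficients vanish for `ℓ > k`. -/
def coeff : ℕ → ℕ → ℕ → R
  | _, 0, ℓ => if ℓ = 0 then 1 else 0
  | n, k + 1, 0 => u n (k + 1) * coeff n k 0
  | n, k + 1, ℓ + 1 => u n (k + 1) * coeff n k (ℓ + 1) + v n (k + 1) * coeff (n + 1) k ℓ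

lemma coeff_of_lt {n k ℓ : ℕ} (h : k < ℓ) : coeff u v n k ℓ = 0 := by
  induction k generalizing n ℓ with
  | zero => simp [coeff, Nat.pos_iff_ne_zero.1 h]
  | succ k ih =>
    obtain ⟨ℓ, rfl⟩ := Nat.exists_eq_add_one_of_ne_zero (Nat.ne_zero_of_lt h)
    simp [coeff, ih (n := n) (by omega : k < ℓ + 1), ih (n := n + 1) (by omega : k < ℓ)]

lemma eulerSeidelCoeff_succ_zero (n k : ℕ) :
    eulerSeidelCoeff u v n (k + 1) 0 = u n (k + 1) * eulerSeidelCoeff u v n k 0 := by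
  rw [eulerSeidelCoeff_eq_sum_term u v (Nat.zero_le _),
    eulerSeidelCoeff_eq_sum_term u v (Nat.zero_le _), Nat.sub_zero, Nat.sub_zero,
    sum_term_succ_succ, powersetCard_eq_empty.2 (by simp), sum_empty, mul_zero, zero_add]

lemma eulerSeidelCoeff_succ_succ {n k ℓ : ℕ} (hℓ : ℓ < k) :
    eulerSeidelCoeff u v n (k + 1) (ℓ + 1) =
      u n (k + 1) * eulerSeidelCoeff u v n k (ℓ + 1) +
        v n (k + 1) * eulerSeidelCoeff u v (n + 1) k ℓ := by
  obtain ⟨m, hm⟩ : ∃ m, k - ℓ = m + 1 := ⟨k - (ℓ + 1), by omega⟩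
  rw [eulerSeidelCoeff_eq_sum_term u v (by omega), eulerSeidelCoeff_eq_sum_term u v hℓ,
    eulerSeidelCoeff_eq_sum_term u v hℓ.le, Nat.add_sub_add_right, hm, sum_term_succ_succ,
    show k - (ℓ + 1) = m by omega, add_comm]

lemma eulerSeidelCoeff_succ_self (n k : ℕ) :
    eulerSeidelCoeff u v n (k + 1) (k + 1) = v n (k + 1) * eulerSeidelCoeff u v (n + 1) k k := by
  rw [eulerSeidelCoeff_eq_sum_term u v le_rfl, eulerSeidelCoeff_eq_sum_term u v le_rfl,
    Nat.sub_self, Nat.sub_self, sum_term_succ_zero]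

lemma eulerSeidelCoeff_eq_coeff {n k ℓ : ℕ} (hℓ : ℓ ≤ k) :
    eulerSeidelCoeff u v n k ℓ = coeff u v n k ℓ := by
  induction k generalizing n ℓ with
  | zero => simp [Nat.le_zero.1 hℓ, eulerSeidelCoeff, coeff]
  | succ k ih =>
    rcases ℓ with _ | ℓ
    · rw [eulerSeidelCoeff_succ_zero, coeff, ih (Nat.zero_le k)]
    rcases Nat.lt_or_ge ℓ k with hlt | hge
    · rw [eulerSeidelCoeff_succ_succ u v hlt, coeff, ih hlt, ih hlt.le]
    · obtain rfl : ℓ = k := by omega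
      rw [eulerSeidelCoeff_succ_self, coeff, coeff_of_lt u v (Nat.lt_succ_self ℓ), ih le_rfl,
        mul_zero, zero_add]

lemma eq_sum_coeff_mul {a : ℕ → ℕ → R}
    (ha : ∀ n k, a n (k + 1) = u n (k + 1) * a n k + v n (k + 1) * a (n + 1) k) (n k : ℕ) :
    a n k = ∑ ℓ ∈ range (k + 1), coeff u v n k ℓ * a (n + ℓ) 0 := by
  induction k generalizing n with
  | zero => simp [coeff]
  | succ k ih =>
    have hext : ∑ ℓ ∈ range (k + 1), coeff u v n k ℓ * a (n + ℓ) 0 =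
        ∑ ℓ ∈ range (k + 2), coeff u v n k ℓ * a (n + ℓ) 0 := by
      rw [sum_range_succ _ (k + 1), coeff_of_lt u v (Nat.lt_succ_self k), zero_mul, add_zero]
    rw [ha, ih n, ih (n + 1), hext, sum_range_succ', sum_range_succ' _ (k + 1)]
    simp only [coeff, add_mul, mul_add, sum_add_distrib, mul_sum, mul_assoc, add_assoc,
      Nat.add_comm 1]
    ring

lemma isFinalCoeff_coeff : IsFinalCoeff u v (coeff u v 0) :=
  ⟨fun _ _ h => coeff_of_lt u v h, fun _ ha k => by simpa using eq_sum_coeff_mul u v ha 0 k⟩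

def matrix (f : ℕ → R) : ℕ → ℕ → R
  | n, 0 => f n
  | n, k + 1 => u n (k + 1) * matrix f n k + v n (k + 1) * matrix f (n + 1) k

variable {u v}

/-- Evaluating both expansions of the matrix started from the indicator of `ℓ` isolates the
coefficient of index `ℓ`. -/
lemma _root_.IsFinalCoeff.eq_coeff {r : ℕ → ℕ → R} (hr : IsFinalCoeff u v r) :
    r = coeff u v 0 := by
  funext k ℓ
  rcases Nat.lt_or_ge k ℓ with hlt | hle
  · rw [hr.1 k ℓ hlt, coeff_of_lt u v hlt]
  have ha : ∀ n k, matrix u v (Pi.single ℓ 1) n (k + 1) =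
      u n (k + 1) * matrix u v (Pi.single ℓ 1) n k +
        v n (k + 1) * matrix u v (Pi.single ℓ 1) (n + 1) k := fun _ _ => rfl
  have hℓ : ℓ ∈ range (k + 1) := mem_range.2 (Nat.lt_succ_of_le hle)
  have h₁ := hr.2 _ ha k
  have h₂ := eq_sum_coeff_mul u v ha 0 k
  simp only [matrix, zero_add, Pi.single_apply, mul_ite, mul_one, mul_zero, sum_ite_eq',
    if_pos hℓ] at h₁ h₂
  rw [← h₁, ← h₂]

end EulerSeidel

theorem existsUnique_finalCoeff_general {R : Type*} [CommRing R]
    (u v : ℕ → ℕ → R) :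
    (∃! r : ℕ → ℕ → R, IsFinalCoeff u v r) ∧
      ∀ r : ℕ → ℕ → R, IsFinalCoeff u v r →
        ∀ k ℓ, ℓ ≤ k → r k ℓ = eulerSeidelCoeff u v 0 k ℓ := by
  refine ⟨⟨EulerSeidel.coeff u v 0, EulerSeidel.isFinalCoeff_coeff u v,
    fun _ hr => hr.eq_coeff⟩, fun r hr k ℓ hℓ => ?_⟩
  rw [hr.eq_coeff, EulerSeidel.eulerSeidelCoeff_eq_coeff u v hℓ]

/-- Corollary 2.8: there is a unique lower-triangular family `r` with
`a_0^k = Σ_{ℓ ≤ k} r(k,ℓ) a_ℓ^0` for every initial sequence, namely `r(k,ℓ) = C_0(k,ℓ)`. -/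
theorem existsUnique_finalCoeff {R : Type*} [CommRing R] [Nontrivial R]
    (u v : ℕ → ℕ → R) :
    (∃! r : ℕ → ℕ → R, IsFinalCoeff u v r) ∧
      ∀ r : ℕ → ℕ → R, IsFinalCoeff u v r →
        ∀ k ℓ, ℓ ≤ k → r k ℓ = eulerSeidelCoeff u v 0 k ℓ :=
  existsUnique_finalCoeff_general u v
end

section
/- Let p, q ∈ ℝ be constants, let (a_n)_{n≥0} be a real sequence, and let (a_n^k) satisfy a_n^0 = a_n and a_n^k = p·a_n^{k−1} + (q/(n+1))·a_{n+1}^{k−1} for n ≥ 0, k ≥ 1. Then the ordinary generating function of the final sequence satisfies ā(t) = (1/(1−p t)) · A( q t/(1−p t) ) as formal power series in ℝ⟦t⟧; equivalently, for every k ≥ 0, a_0^k = Σ_{ℓ=0}^{k} binom(k,ℓ) · p^{k−ℓ} · (q^ℓ/ℓ!) · a_ℓ^0. -/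
/-!
Dividing row `n` by `n!` turns the recurrence into `c_n^k = p c_n^{k-1} + q c_{n+1}^{k-1}`, i.e.
`c^k = (q S + p)^k c^0` for the shift operator `S`, and the binomial theorem gives the explicit
formula `a_0^k = Σ_ℓ binom(k,ℓ) p^{k-ℓ} q^ℓ a_ℓ/ℓ!`. On the generating-function side, since
`(q t/(1-pt))^ℓ` has order `ℓ`, the coefficient of `t^k` in `(1-pt)⁻¹ A(qt/(1-pt))` is
`Σ_{ℓ ≤ k} (a_ℓ/ℓ!) [t^k] q^ℓ t^ℓ (1-pt)^{-(ℓ+1)} = Σ_{ℓ ≤ k} (a_ℓ/ℓ!) q^ℓ binom(k,ℓ) p^{k-ℓ}`.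
-/

open PowerSeries

/-- Formal substitution of the power series `f` into the power series `g`: the series
`g(f(t))`. For `f` with zero constant term (the case used here), the coefficient of `t^n`
in `g(f(t))` is `Σ_{k ≤ n} (coeff k g) · (coeff n (f^k))`. -/
noncomputable def substPS (f g : PowerSeries ℝ) : PowerSeries ℝ :=
  PowerSeries.mk fun n =>
    ∑ k ∈ Finset.range (n + 1), PowerSeries.coeff k g * PowerSeries.coeff n (f ^ k)

open Finset

theorem funLeft_succ_pow_apply {R M : Type*} [Semiring R] [AddCommMonoid M] [Module R M]
    (ℓ : ℕ) (c : ℕ → M) (n : ℕ) :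
    (LinearMap.funLeft R M Nat.succ ^ ℓ) c n = c (n + ℓ) := by
  induction ℓ generalizing c n with
  | zero => rfl
  | succ ℓ ih => rw [pow_succ, Module.End.mul_apply, ih]; rfl

theorem eq_sum_choose_of_rec {R : Type*} [CommSemiring R] (p q : R) (c : ℕ → ℕ → R)
    (hrec : ∀ n k, c n (k + 1) = p * c n k + q * c (n + 1) k) (n k : ℕ) :
    c n k = ∑ ℓ ∈ range (k + 1), k.choose ℓ * p ^ (k - ℓ) * q ^ ℓ * c (n + ℓ) 0 := by
  set S : Module.End R (ℕ → R) := LinearMap.funLeft R R Nat.succ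
  have hpow : ∀ k, (fun n => c n k) = ((q • S + p • 1) ^ k) (fun n => c n 0) := by
    intro k
    induction k with
    | zero => rfl
    | succ k ih =>
      rw [pow_succ', Module.End.mul_apply, ← ih]
      funext n
      simp [S, hrec, add_comm]
  have hcomm : Commute (q • S) (p • 1) := ((Commute.one_right S).smul_right p).smul_left q
  rw [congrFun (hpow k) n, hcomm.add_pow]
  simp only [S, smul_pow, one_pow, Algebra.mul_smul_comm, mul_one, Algebra.smul_mul_assoc,
    LinearMap.sum_apply, LinearMap.smul_apply, Module.End.mul_apply, Module.End.natCast_apply,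
    nsmul_eq_mul, Finset.sum_apply, Pi.smul_apply, funLeft_succ_pow_apply, Pi.mul_apply,
    Pi.natCast_apply, smul_eq_mul]
  exact sum_congr rfl fun ℓ _ => by ring

theorem div_factorial_rec {K : Type*} [Field K] [CharZero K] (p q : K) (a : ℕ → ℕ → K)
    (hrec : ∀ n k, a n (k + 1) = p * a n k + q / ((n : K) + 1) * a (n + 1) k) (n k : ℕ) :
    a n (k + 1) / n.factorial =
      p * (a n k / n.factorial) + q * (a (n + 1) k / (n + 1).factorial) := by
  rw [hrec, Nat.factorial_succ]
  push_cast
  field_simp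

section GeometricSeries

variable {K : Type*} [Field K]

theorem inv_one_sub_C_mul_X (p : K) : (1 - C p * X)⁻¹ = rescale p (mk 1) := by
  rw [PowerSeries.inv_eq_iff_mul_eq_one (by simp)]
  simpa [rescale_X] using congrArg (rescale p) (mk_one_mul_one_sub_eq_one K)

theorem coeff_X_pow_mul_inv_one_sub_C_mul_X_pow (p : K) (ℓ n : ℕ) :
    coeff n (X ^ ℓ * (1 - C p * X)⁻¹ ^ (ℓ + 1)) = n.choose ℓ * p ^ (n - ℓ) := by
  rw [inv_one_sub_C_mul_X, ← map_pow, mk_one_pow_eq_mk_choose_add, coeff_X_pow_mul']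
  split_ifs with h
  · rw [coeff_rescale, coeff_mk, Nat.add_sub_cancel' h, mul_comm]
  · simp [Nat.choose_eq_zero_of_lt (not_le.1 h)]

theorem coeff_inv_one_sub_C_mul_X_mul_pow (p q : K) (ℓ n : ℕ) :
    coeff n ((1 - C p * X)⁻¹ * (C q * X * (1 - C p * X)⁻¹) ^ ℓ) =
      n.choose ℓ * p ^ (n - ℓ) * q ^ ℓ := by
  have : (1 - C p * X)⁻¹ * (C q * X * (1 - C p * X)⁻¹) ^ ℓ =
      C (q ^ ℓ) * (X ^ ℓ * (1 - C p * X)⁻¹ ^ (ℓ + 1)) := by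
    rw [mul_pow, mul_pow, map_pow]
    ring
  rw [this, coeff_C_mul, coeff_X_pow_mul_inv_one_sub_C_mul_X_pow, mul_comm]

end GeometricSeries

theorem coeff_substPS_of_le {f : ℝ⟦X⟧} (hf : X ∣ f) (g : ℝ⟦X⟧) {n N : ℕ} (hn : n ≤ N) :
    coeff n (substPS f g) = ∑ ℓ ∈ range (N + 1), coeff ℓ g * coeff n (f ^ ℓ) := by
  rw [substPS, coeff_mk]
  refine sum_subset (range_subset_range.2 (by omega)) fun ℓ _ hℓ => ?_
  rw [X_pow_dvd_iff.1 (pow_dvd_pow_of_dvd hf ℓ) n (by simp at hℓ; omega), mul_zero]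

theorem coeff_mul_substPS {f : ℝ⟦X⟧} (hf : X ∣ f) (h g : ℝ⟦X⟧) (n : ℕ) :
    coeff n (h * substPS f g) = ∑ ℓ ∈ range (n + 1), coeff ℓ g * coeff n (h * f ^ ℓ) := by
  calc coeff n (h * substPS f g)
      = ∑ x ∈ antidiagonal n, ∑ ℓ ∈ range (n + 1),
          coeff ℓ g * (coeff x.1 h * coeff x.2 (f ^ ℓ)) := by
        rw [coeff_mul]
        refine sum_congr rfl fun x hx => ?_
        rw [coeff_substPS_of_le hf g (HasAntidiagonal.antidiagonal.snd_le hx), mul_sum]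
        exact sum_congr rfl fun ℓ _ => by ring
    _ = ∑ ℓ ∈ range (n + 1), coeff ℓ g * coeff n (h * f ^ ℓ) := by
        rw [sum_comm]
        simp_rw [← mul_sum, ← coeff_mul]

/-- Theorem 2.9: if `a_n^k = p a_n^{k-1} + (q/(n+1)) a_{n+1}^{k-1}`, then the ordinary
generating function of the final sequence is `(1/(1-pt)) A(qt/(1-pt))`; equivalently
`a_0^k = Σ_ℓ binom(k,ℓ) p^{k-ℓ} (q^ℓ/ℓ!) a_ℓ^0`. -/
theorem ogf_final_eq (p q : ℝ) (a₀ : ℕ → ℝ) (a : ℕ → ℕ → ℝ)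
    (h0 : ∀ n, a n 0 = a₀ n)
    (hrec : ∀ n k, a n (k + 1) = p * a n k + q / ((n : ℝ) + 1) * a (n + 1) k) :
    PowerSeries.mk (fun k => a 0 k) =
      (1 - PowerSeries.C p * X)⁻¹ *
        substPS (PowerSeries.C q * X * (1 - PowerSeries.C p * X)⁻¹)
          (PowerSeries.mk fun n => a₀ n / n.factorial) ∧
    ∀ k, a 0 k = ∑ ℓ ∈ Finset.range (k + 1),
      (k.choose ℓ : ℝ) * p ^ (k - ℓ) * (q ^ ℓ / ℓ.factorial) * a₀ ℓ := by
  have hexplicit : ∀ k, a 0 k = ∑ ℓ ∈ Finset.range (k + 1),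
      (k.choose ℓ : ℝ) * p ^ (k - ℓ) * (q ^ ℓ / ℓ.factorial) * a₀ ℓ := by
    intro k
    have h := eq_sum_choose_of_rec p q (fun n k => a n k / n.factorial)
      (div_factorial_rec p q a hrec) 0 k
    simp only [Nat.factorial_zero, Nat.cast_one, div_one, zero_add, h0] at h
    rw [h]
    exact sum_congr rfl fun ℓ _ => by ring
  refine ⟨?_, hexplicit⟩
  ext k
  rw [coeff_mk, coeff_mul_substPS (dvd_mul_of_dvd_left (dvd_mul_left X _) _), hexplicit k]
  refine sum_congr rfl fun ℓ _ => ?_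
  rw [coeff_mk, coeff_inv_one_sub_C_mul_X_mul_pow]
  ring
end

section
/- Let (δ_n^k)_{n,k≥0} be the integer array defined by δ_n^0 = 1 for all n ≥ 0 and δ_n^k = −δ_n^{k−1} + (n+1)·δ_{n+1}^{k−1} for all n ≥ 0 and k ≥ 1. Then for all n ≥ 0 and k ≥ 0, δ_n^k = Σ_{ℓ=0}^{k} (−1)^{k−ℓ} · binom(k,ℓ) · (n+ℓ)!/n!, where (n+ℓ)!/n! = ∏_{i=1}^{ℓ} (n+i) is the rising factorial. -/
/-!
Write `T` for the weighted shift `(T f) n = v n * f (n + 1)`. The Euler–Seidel recurrence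
`δ_n^{k+1} = u δ_n^k + v(n) δ_{n+1}^k` with constant `u` says that column `k` is `(T + u)^k`
applied to column `0`. The scalar `u` commutes with `T`, so the binomial theorem expands
`(T + u)^k = ∑ binom(k,ℓ) u^{k-ℓ} T^ℓ`, and `(T^ℓ f) n = v(n) ⋯ v(n+ℓ-1) f(n+ℓ)`.
For `u = -1`, `v(n) = n + 1` and `f = 1` this product is `(n+ℓ)!/n!`.
-/

open Finset

section EulerSeidel

variable {R : Type*} [CommRing R]

def weightedShift (v : ℕ → R) : Module.End R (ℕ → R) where
  toFun f n := v n * f (n + 1)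
  map_add' f g := funext fun n => mul_add (v n) (f (n + 1)) (g (n + 1))
  map_smul' c f := funext fun n => mul_left_comm (v n) c (f (n + 1))

@[simp]
theorem weightedShift_apply (v : ℕ → R) (f : ℕ → R) (n : ℕ) :
    weightedShift v f n = v n * f (n + 1) :=
  rfl

theorem weightedShift_pow_apply (v : ℕ → R) (ℓ : ℕ) (f : ℕ → R) (n : ℕ) :
    (weightedShift v ^ ℓ) f n = (∏ i ∈ range ℓ, v (n + i)) * f (n + ℓ) := by
  induction ℓ generalizing f with
  | zero => simp
  | succ ℓ ih =>
    rw [pow_succ, Module.End.mul_apply, ih, weightedShift_apply, prod_range_succ, mul_assoc,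
      add_assoc]

theorem eulerSeidel_column_eq_pow_apply (u : R) (v : ℕ → R) (δ : ℕ → ℕ → R)
    (hrec : ∀ n k, δ n (k + 1) = u * δ n k + v n * δ (n + 1) k) (k : ℕ) :
    (fun n => δ n k) = ((weightedShift v + algebraMap R _ u) ^ k) (fun n => δ n 0) := by
  induction k with
  | zero => rfl
  | succ k ih =>
    rw [pow_succ', Module.End.mul_apply, ← ih]
    ext n
    rw [LinearMap.add_apply, Pi.add_apply, Module.algebraMap_end_apply, Pi.smul_apply,
      smul_eq_mul, weightedShift_apply, hrec, add_comm]

theorem eulerSeidel_eq_sum (u : R) (v : ℕ → R) (δ : ℕ → ℕ → R)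
    (hrec : ∀ n k, δ n (k + 1) = u * δ n k + v n * δ (n + 1) k) (n k : ℕ) :
    δ n k = ∑ ℓ ∈ range (k + 1),
      u ^ (k - ℓ) * (k.choose ℓ : R) * ((∏ i ∈ range ℓ, v (n + i)) * δ (n + ℓ) 0) := by
  have hcomm : Commute (weightedShift v) (algebraMap R _ u) := (Algebra.commutes u _).symm
  refine (congrFun (eulerSeidel_column_eq_pow_apply u v δ hrec k) n).trans ?_
  rw [hcomm.add_pow, LinearMap.sum_apply, Finset.sum_apply]
  refine sum_congr rfl fun ℓ _ => ?_
  rw [← map_pow, ← map_natCast (algebraMap R (Module.End R (ℕ → R))), mul_assoc, ← map_mul,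
    ← Algebra.commutes, Module.End.mul_apply, Module.algebraMap_end_apply, Pi.smul_apply,
    smul_eq_mul, weightedShift_pow_apply]

end EulerSeidel

/-- Theorem 3.1: for the Euler–Seidel matrix `δ` with `u = -1`, `v(n,k) = n+1` and
constant initial sequence `1`, we have
`δ_n^k = Σ_{ℓ=0}^{k} (-1)^{k-ℓ} binom(k,ℓ) (n+ℓ)!/n!`, where
`(n+ℓ)!/n! = ∏_{i=1}^{ℓ} (n+i)`. -/
theorem delta_eq_sum (δ : ℕ → ℕ → ℤ)
    (h0 : ∀ n, δ n 0 = 1)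
    (hrec : ∀ n k, δ n (k + 1) = -δ n k + ((n : ℤ) + 1) * δ (n + 1) k) :
    ∀ n k, δ n k = ∑ ℓ ∈ Finset.range (k + 1),
      (-1 : ℤ) ^ (k - ℓ) * (k.choose ℓ : ℤ) * ∏ i ∈ Finset.Icc 1 ℓ, ((n : ℤ) + i) := by
  intro n k
  have hrec' : ∀ n k, δ n (k + 1) = -1 * δ n k + ((n : ℤ) + 1) * δ (n + 1) k := fun n k => by
    rw [hrec, neg_one_mul]
  rw [eulerSeidel_eq_sum (-1) (fun n => (n : ℤ) + 1) δ hrec' n k]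
  refine sum_congr rfl fun ℓ _ => ?_
  rw [h0, mul_one, ← Ico_add_one_right_eq_Icc, ← prod_Ico_add' _ 0 ℓ 1, ← range_eq_Ico]
  push_cast
  simp only [add_assoc]
end

section
/- Let (δ_n^k)_{n,k≥0} be the integer array defined by δ_n^0 = 1 for all n ≥ 0 and δ_n^k = −δ_n^{k−1} + (n+1)·δ_{n+1}^{k−1} for all n ≥ 0 and k ≥ 1. Then for every k ≥ 0, δ_0^k equals the number of derangements of a set of k elements, i.e. δ_0^k = Σ_{ℓ=0}^{k} (−1)^{k−ℓ} · k!/(k−ℓ)! = d_k, the number of fixed-point-free permutations of {1,…,k}. -/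
/-!
Write the recurrence as `δ_·^{k+1} = (V - 1) δ_·^k`, where `(V a)_n = (n + 1) a_{n+1}`.
Since `V` commutes with `1`, the binomial theorem gives
`δ_n^k = Σ_ℓ (-1)^{k-ℓ} C(k,ℓ) (V^ℓ 1)_n = Σ_ℓ (-1)^{k-ℓ} C(k,ℓ) (n+1)(n+2)⋯(n+ℓ)`,
which at `n = 0` is `Σ_ℓ (-1)^{k-ℓ} k!/(k-ℓ)!`. This sum satisfies the derangement recurrence
`d_{k+1} = (k + 1) d_k - (-1)^k`.
-/

open Finset

lemma Module.End.sub_one_pow_apply {R M : Type*} [Ring R] [AddCommGroup M] [Module R M]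
    (f : Module.End R M) (k : ℕ) (x : M) :
    ((f - 1) ^ k) x = ∑ ℓ ∈ range (k + 1), (k.choose ℓ * (-1 : ℤ) ^ (k - ℓ)) • (f ^ ℓ) x := by
  rw [sub_eq_add_neg, ← Int.cast_one, ← Int.cast_neg, (Int.cast_commute _ f).symm.add_pow]
  simp only [← Int.cast_pow, LinearMap.sum_apply, Module.End.mul_apply, Module.End.natCast_apply,
    Module.End.intCast_apply, map_nsmul, map_zsmul, mul_smul, Nat.cast_smul_eq_nsmul]

def shiftMul : Module.End ℤ (ℕ → ℤ) where
  toFun a n := ((n : ℤ) + 1) * a (n + 1)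
  map_add' a b := by ext n; simp [mul_add]
  map_smul' c a := by ext n; simp only [Pi.smul_apply, smul_eq_mul, RingHom.id_apply]; ring

lemma shiftMul_apply (a : ℕ → ℤ) (n : ℕ) : shiftMul a n = ((n : ℤ) + 1) * a (n + 1) := rfl

lemma shiftMul_pow_one_apply (j n : ℕ) :
    (shiftMul ^ j) 1 n = ((n + 1).ascFactorial j : ℤ) := by
  induction j generalizing n with
  | zero => simp
  | succ j ih =>
    rw [pow_succ', Module.End.mul_apply, shiftMul_apply, ih, Nat.ascFactorial_succ,
      ← Nat.succ_ascFactorial]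
    push_cast
    ring

section EulerSeidel

variable (δ : ℕ → ℕ → ℤ) (h0 : ∀ n, δ n 0 = 1)
  (hrec : ∀ n k, δ n (k + 1) = -δ n k + ((n : ℤ) + 1) * δ (n + 1) k)
include h0 hrec

lemma eulerSeidel_column_eq_pow_apply_s14 (k : ℕ) : (δ · k) = ((shiftMul - 1) ^ k) 1 := by
  induction k with
  | zero => ext n; simp [h0]
  | succ k ih =>
    rw [pow_succ', Module.End.mul_apply, ← ih]
    ext n
    simp only [hrec, LinearMap.sub_apply, shiftMul_apply, Module.End.one_apply, Pi.sub_apply]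
    ring

lemma eulerSeidel_zero_eq_sum (k : ℕ) :
    δ 0 k = ∑ ℓ ∈ range (k + 1), (-1 : ℤ) ^ (k - ℓ) * (k.descFactorial ℓ : ℤ) := by
  rw [congrFun (eulerSeidel_column_eq_pow_apply_s14 δ h0 hrec k) 0, Module.End.sub_one_pow_apply,
    Finset.sum_apply]
  refine sum_congr rfl fun ℓ _ => ?_
  rw [Pi.smul_apply, shiftMul_pow_one_apply, Nat.one_ascFactorial,
    Nat.descFactorial_eq_factorial_mul_choose, smul_eq_mul]
  push_cast
  ring

end EulerSeidel

lemma sum_neg_one_pow_mul_descFactorial_succ (k : ℕ) :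
    ∑ ℓ ∈ range (k + 2), (-1 : ℤ) ^ (k + 1 - ℓ) * ((k + 1).descFactorial ℓ : ℤ) =
      (k + 1) * ∑ ℓ ∈ range (k + 1), (-1 : ℤ) ^ (k - ℓ) * (k.descFactorial ℓ : ℤ) - (-1) ^ k := by
  rw [sum_range_succ', mul_sum]
  simp only [Nat.succ_descFactorial_succ, Nat.add_sub_add_right, Nat.descFactorial_zero]
  push_cast
  ring_nf

lemma numDerangements_eq_sum_neg_one_pow_mul_descFactorial (k : ℕ) :
    (numDerangements k : ℤ) = ∑ ℓ ∈ range (k + 1), (-1 : ℤ) ^ (k - ℓ) * (k.descFactorial ℓ : ℤ) := by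
  induction k with
  | zero => simp
  | succ k ih => rw [numDerangements_succ, sum_neg_one_pow_mul_descFactorial_succ, ih]

/-- Equation (3.3): for the Euler–Seidel matrix `δ` with `u = -1`, `v(n,k) = n+1` and
constant initial sequence `1`, the final sequence
`δ_0^k = Σ_{ℓ=0}^{k} (-1)^{k-ℓ} k!/(k-ℓ)!` is the number of derangements of a
`k`-element set. -/
theorem delta_zero_eq_numDerangements (δ : ℕ → ℕ → ℤ)
    (h0 : ∀ n, δ n 0 = 1)
    (hrec : ∀ n k, δ n (k + 1) = -δ n k + ((n : ℤ) + 1) * δ (n + 1) k) :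
    ∀ k, δ 0 k = ∑ ℓ ∈ Finset.range (k + 1), (-1 : ℤ) ^ (k - ℓ) * (k.descFactorial ℓ : ℤ) ∧
      δ 0 k = (numDerangements k : ℤ) := by
  intro k
  have hsum := eulerSeidel_zero_eq_sum δ h0 hrec k
  exact ⟨hsum, hsum.trans (numDerangements_eq_sum_neg_one_pow_mul_descFactorial k).symm⟩
end

section
/- Let (δ_n^k)_{n,k≥0} be the rational array defined by δ_n^0 = 1 for all n ≥ 0 and δ_n^k = −δ_n^{k−1} + (n+1)·δ_{n+1}^{k−1} for all n ≥ 0 and k ≥ 1. Then the exponential generating function of the final sequence (δ_0^k)_{k≥0} satisfies Σ_{k≥0} δ_0^k t^k/k! = exp(−t) · (1/(1−t)) as formal power series in ℚ⟦t⟧, where exp(−t) = Σ_{n≥0} (−1)^n t^n/n! and 1/(1−t) is the multiplicative inverse of 1−t, i.e. Σ_{n≥0} t^n. -/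
/-!
The rescaled array `eₙᵏ = n! δₙᵏ` satisfies `eₙᵏ⁺¹ = eₙ₊₁ᵏ - eₙᵏ`, so its
columns are iterated forward differences of `n ↦ n!`, and `δ₀ᵏ = ∑ (-1)^(k-i) (k choose i) i!`.
Dividing by `k!` gives `∑ (-1)^(k-i) / (k-i)!`, the Cauchy product of the coefficients of
`exp(-t)` and of `1/(1-t) = ∑ tⁿ`.
-/

open PowerSeries Nat

theorem eq_fwdDiff_iter_of_succ {G : Type*} [AddCommGroup G] (e : ℕ → ℕ → G)
    (he : ∀ n k, e n (k + 1) = e (n + 1) k - e n k) (k : ℕ) :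
    (fun n => e n k) = (fwdDiff 1)^[k] (fun n => e n 0) := by
  induction k with
  | zero => rfl
  | succ k ih =>
    funext n
    rw [Function.iterate_succ_apply', ← ih, he]
    rfl

theorem eulerSeidel_zero_eq_sum_choose {R : Type*} [CommRing R] (δ : ℕ → ℕ → R) (a : ℕ → R)
    (h0 : ∀ n, δ n 0 = a n)
    (hrec : ∀ n k, δ n (k + 1) = -δ n k + ((n : R) + 1) * δ (n + 1) k) (k : ℕ) :
    δ 0 k = ∑ i ∈ Finset.range (k + 1), (-1) ^ (k - i) * k.choose i * i ! * a i := by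
  have he : ∀ n k, (n ! : R) * δ n (k + 1) = (n + 1)! * δ (n + 1) k - n ! * δ n k := by
    intro n k
    rw [hrec, factorial_succ]
    push_cast
    ring
  have := congrFun (eq_fwdDiff_iter_of_succ (fun n k => (n ! : R) * δ n k) he k) 0
  simpa [h0, fwdDiff_iter_eq_sum_shift, zsmul_eq_mul, mul_assoc] using this

theorem one_sub_X_inv {K : Type*} [Field K] : (1 - X : K⟦X⟧)⁻¹ = mk 1 :=
  (PowerSeries.inv_eq_iff_mul_eq_one (by simp)).2 (mk_one_mul_one_sub_eq_one K)

theorem coeff_rescale_neg_one_exp_mul_mk_one (k : ℕ) :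
    coeff k (rescale (-1) (exp ℚ) * mk 1) =
      ∑ i ∈ Finset.range (k + 1), (-1) ^ (k - i) * k.choose i * (i ! : ℚ) / k ! := by
  rw [mul_comm, coeff_mul, Finset.Nat.sum_antidiagonal_eq_sum_range_succ
    (fun i j => coeff i (mk 1 : ℚ⟦X⟧) * coeff j (rescale (-1) (exp ℚ)))]
  refine Finset.sum_congr rfl fun i hi => ?_
  have hik : i ≤ k := Nat.lt_succ_iff.mp (Finset.mem_range.mp hi)
  simp only [coeff_mk, Pi.one_apply, coeff_rescale, coeff_exp, Algebra.algebraMap_self,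
    RingHom.id_apply, cast_choose ℚ hik]
  field_simp

/-- Equation (3.4): for the Euler–Seidel matrix `δ` with `u = -1`, `v(n,k) = n+1` and
constant initial sequence `1`, the exponential generating function of the final sequence
is `exp(-t)/(1-t)` in `ℚ⟦t⟧`. -/
theorem egf_delta_final (δ : ℕ → ℕ → ℚ)
    (h0 : ∀ n, δ n 0 = 1)
    (hrec : ∀ n k, δ n (k + 1) = -δ n k + ((n : ℚ) + 1) * δ (n + 1) k) :
    PowerSeries.mk (fun k => δ 0 k / k.factorial) =
      rescale (-1) (exp ℚ) * (1 - X : PowerSeries ℚ)⁻¹ := by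
  ext k
  rw [one_sub_X_inv, coeff_rescale_neg_one_exp_mul_mk_one, coeff_mk,
    eulerSeidel_zero_eq_sum_choose δ (fun _ => 1) h0 hrec, Finset.sum_div]
  simp only [mul_one]
end
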